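/- arXiv:2409.09961 — 7 statements merged into one kernel-verified Lean document; each statement's English description precedes it below -/
import Mathlib

section
/- Let K be a nonempty compact subset of ℝⁿ and suppose that at a point π₀ ∈ ℝⁿ the set argmin_{y∈K} ⟨y, π₀⟩ is a singleton {b}. Then the function m(π) = min_{y∈K} ⟨y, π⟩ is differentiable at π₀ with gradient equal to b (i.e., m(π₀ + h) = m(π₀) + ⟨b, h⟩ + o(‖h‖)). -/
open scoped InnerProductSpace

/-- Envelope/Danskin theorem: if at `π₀` the argmin set
`argmin_{y∈K} ⟨y, π₀⟩` is a singleton `{b}`, then `m(π) = min_{y∈K} ⟨y, π⟩`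
is differentiable at `π₀` with gradient `b`. -/
theorem stmt_2 {n : ℕ} (K : Set (EuclideanSpace ℝ (Fin n)))
    (hKne : K.Nonempty) (hKcpt : IsCompact K)
    (m : EuclideanSpace ℝ (Fin n) → ℝ)
    (hm : ∀ π : EuclideanSpace ℝ (Fin n), IsLeast ((fun y => ⟪y, π⟫_ℝ) '' K) (m π))
    (π₀ b : EuclideanSpace ℝ (Fin n))
    (hb : {y | y ∈ K ∧ ∀ z ∈ K, ⟪y, π₀⟫_ℝ ≤ ⟪z, π₀⟫_ℝ} = {b}) :
    HasGradientAt m b π₀ := by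
  -- b is in K and is a minimizer
  have hbprop : b ∈ {y | y ∈ K ∧ ∀ z ∈ K, ⟪y, π₀⟫_ℝ ≤ ⟪z, π₀⟫_ℝ} := by
    rw [hb]; exact rfl
  obtain ⟨hbK, hbmin⟩ := hbprop
  -- m π₀ = ⟪b, π₀⟫
  have hmb : m π₀ = ⟪b, π₀⟫_ℝ := by
    obtain ⟨y, hyK, hy⟩ := (hm π₀).1
    have hy' : ⟪y, π₀⟫_ℝ = m π₀ := hy
    have h1 : m π₀ ≤ ⟪b, π₀⟫_ℝ := (hm π₀).2 ⟨b, hbK, rfl⟩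
    have h2 : ⟪b, π₀⟫_ℝ ≤ ⟪y, π₀⟫_ℝ := hbmin y hyK
    linarith
  -- bound on K
  obtain ⟨R₀, hR₀⟩ := hKcpt.isBounded.exists_norm_le
  set R : ℝ := max R₀ 1 with hRdef
  have hR1 : (1:ℝ) ≤ R := le_max_right _ _
  have hRpos : (0:ℝ) < R := lt_of_lt_of_le one_pos hR1
  have hR : ∀ y ∈ K, ‖y‖ ≤ R := fun y hy => le_trans (hR₀ y hy) (le_max_left _ _)
  have hbR : ‖b‖ ≤ R := hR b hbK
  -- upper bound: m (π₀ + h) ≤ m π₀ + ⟪b, h⟫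
  have hupper : ∀ h : EuclideanSpace ℝ (Fin n), m (π₀ + h) ≤ m π₀ + ⟪b, h⟫_ℝ := by
    intro h
    have this' : m (π₀ + h) ≤ ⟪b, π₀ + h⟫_ℝ := (hm (π₀ + h)).2 ⟨b, hbK, rfl⟩
    rw [inner_add_right] at this'
    have := this'
    linarith [this, hmb]
  -- key: argmin points for nearby π are close to b
  have key : ∀ ε > (0:ℝ), ∃ δ > (0:ℝ), ∀ h : EuclideanSpace ℝ (Fin n), ‖h‖ < δ →
      ∀ y ∈ K, ⟪y, π₀ + h⟫_ℝ = m (π₀ + h) → ‖y - b‖ ≤ ε := by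
    intro ε hε
    set S : Set (EuclideanSpace ℝ (Fin n)) := K ∩ {y | ε ≤ ‖y - b‖} with hSdef
    have hSclosed : IsClosed {y : EuclideanSpace ℝ (Fin n) | ε ≤ ‖y - b‖} := by
      have : Continuous fun y : EuclideanSpace ℝ (Fin n) => ‖y - b‖ := (continuous_id.sub continuous_const).norm
      exact isClosed_le continuous_const this
    have hScpt : IsCompact S := hKcpt.inter_right hSclosed
    by_cases hSne : S.Nonempty
    · -- min of ⟪·, π₀⟫ on S is strictly above m π₀
      obtain ⟨y₁, hy₁S, hy₁min⟩ := hScpt.exists_isMinOn hSne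
        (show ContinuousOn (fun y : EuclideanSpace ℝ (Fin n) => ⟪y, π₀⟫_ℝ) S from
          (Continuous.inner continuous_id continuous_const).continuousOn)
      set c : ℝ := ⟪y₁, π₀⟫_ℝ
      have hcgt : m π₀ < c := by
        rcases lt_or_eq_of_le ((hm π₀).2 ⟨y₁, hy₁S.1, rfl⟩) with h' | h'
        · exact h'
        · -- then y₁ is a global minimizer, hence = b, contradiction
          exfalso
          have hy₁argmin : y₁ ∈ {y | y ∈ K ∧ ∀ z ∈ K, ⟪y, π₀⟫_ℝ ≤ ⟪z, π₀⟫_ℝ} := by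
            refine ⟨hy₁S.1, fun z hz => ?_⟩
            have : m π₀ ≤ ⟪z, π₀⟫_ℝ := (hm π₀).2 ⟨z, hz, rfl⟩
            linarith [h'.symm]
          rw [hb] at hy₁argmin
          have : y₁ = b := hy₁argmin
          have hε' : ε ≤ ‖y₁ - b‖ := hy₁S.2
          rw [this, sub_self, norm_zero] at hε'
          linarith
      refine ⟨(c - m π₀) / (2 * R), div_pos (by linarith) (by positivity), fun h hh y hyK hymin => ?_⟩
      by_contra hfar
      push_neg at hfar
      have hyS : y ∈ S := ⟨hyK, le_of_lt hfar⟩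
      -- m (π₀ + h) = ⟪y, π₀⟫ + ⟪y, h⟫ ≥ c - R‖h‖
      have h1 : c ≤ ⟪y, π₀⟫_ℝ := hy₁min hyS
      have h2 : |⟪y, h⟫_ℝ| ≤ R * ‖h‖ := by
        calc |⟪y, h⟫_ℝ| ≤ ‖y‖ * ‖h‖ := abs_real_inner_le_norm y h
          _ ≤ R * ‖h‖ := by
            have := hR y hyK
            nlinarith [norm_nonneg h]
      have h3 : |⟪b, h⟫_ℝ| ≤ R * ‖h‖ := by
        calc |⟪b, h⟫_ℝ| ≤ ‖b‖ * ‖h‖ := abs_real_inner_le_norm b h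
          _ ≤ R * ‖h‖ := by nlinarith [norm_nonneg h]
      have h4 : m (π₀ + h) = ⟪y, π₀⟫_ℝ + ⟪y, h⟫_ℝ := by
        rw [← hymin, inner_add_right]
      have h5 := hupper h
      have habs2 := abs_le.1 h2
      have habs3 := abs_le.1 h3
      have hhR : 2 * R * ‖h‖ < c - m π₀ := by
        have h2R : (0:ℝ) < 2 * R := by positivity
        have := (lt_div_iff₀ h2R).mp hh
        linarith
      linarith
    · -- S empty: every point of K is within ε of b
      refine ⟨1, one_pos, fun h _ y hyK _ => ?_⟩
      by_contra hfar
      push_neg at hfar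
      exact hSne ⟨y, hyK, le_of_lt hfar⟩
  -- now establish the little-o estimate
  rw [hasGradientAt_iff_isLittleO_nhds_zero, Asymptotics.isLittleO_iff]
  intro ε hε
  obtain ⟨δ, hδpos, hδ⟩ := key ε hε
  rw [Metric.eventually_nhds_iff]
  refine ⟨δ, hδpos, fun h hh => ?_⟩
  rw [dist_zero_right] at hh
  obtain ⟨y, hyK, hy⟩ := (hm (π₀ + h)).1
  have hy' : ⟪y, π₀ + h⟫_ℝ = m (π₀ + h) := hy
  have hyb : ‖y - b‖ ≤ ε := hδ h hh y hyK hy'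
  -- lower bound: m (π₀ + h) ≥ m π₀ + ⟪b, h⟫ + ⟪y - b, h⟫
  have hlow : m π₀ + ⟪b, h⟫_ℝ + ⟪y - b, h⟫_ℝ ≤ m (π₀ + h) := by
    have h1 : m π₀ ≤ ⟪y, π₀⟫_ℝ := (hm (π₀)).2 ⟨y, hyK, rfl⟩
    have h2 : m (π₀ + h) = ⟪y, π₀⟫_ℝ + ⟪y, h⟫_ℝ := by
      rw [← hy', inner_add_right]
    have h3 : ⟪y - b, h⟫_ℝ = ⟪y, h⟫_ℝ - ⟪b, h⟫_ℝ := inner_sub_left _ _ _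
    linarith
  have hinner : |⟪y - b, h⟫_ℝ| ≤ ε * ‖h‖ := by
    calc |⟪y - b, h⟫_ℝ| ≤ ‖y - b‖ * ‖h‖ := abs_real_inner_le_norm _ _
      _ ≤ ε * ‖h‖ := by nlinarith [norm_nonneg h]
  have habs := abs_le.1 hinner
  have hup := hupper h
  have hεh : (0:ℝ) ≤ ε * ‖h‖ := by positivity
  rw [Real.norm_eq_abs, abs_le]
  constructor
  · linarith [habs.1]
  · linarith
end

section
/- Let K be a nonempty compact convex subset of ℝⁿ and let x : [0, ∞) → ℝⁿ be locally Lipschitz with x(0) ∈ K. Suppose that for almost every t ≥ 0 the derivative x′(t) exists and equals b(t) − x(t) for some b(t) ∈ K. Then x(t) ∈ K for all t ≥ 0. -/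
open scoped InnerProductSpace
open MeasureTheory Set Real

/-
A point `x T` outside `K` is strictly separated from the closed convex set `K` by a linear
functional: `φ < u` on `K` and `φ (x T) > u`. Along the dynamics, `f t = φ (x t) - u` satisfies
`f' = φ (b t) - φ (x t) < -f` almost everywhere, so `exp t * f t` has a.e. negative derivative.
Being Lipschitz on `[0, T]`, it is absolutely continuous, hence nonincreasing there; since
`f 0 < 0`, this forces `f T < 0`, a contradiction.
-/

namespace AbsolutelyContinuousOnInterval

theorem le_of_ae_deriv_nonpos {g : ℝ → ℝ} {a b : ℝ} (hab : a ≤ b)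
    (hg : AbsolutelyContinuousOnInterval g a b) (hd : ∀ᵐ t, t ∈ Ioo a b → deriv g t ≤ 0) :
    g b ≤ g a := by
  have hint : ∫ t in a..b, deriv g t ≤ 0 := by
    rw [intervalIntegral.integral_of_le hab, ← Measure.restrict_congr_set Ioo_ae_eq_Ioc]
    exact setIntegral_nonpos_ae measurableSet_Ioo hd
  linarith [hg.integral_deriv_eq_sub]

theorem exp_mul_le_of_ae_deriv_le_neg {f : ℝ → ℝ} {a b : ℝ} (hab : a ≤ b)
    (hf : AbsolutelyContinuousOnInterval f a b)
    (hd : ∀ᵐ t, t ∈ Ioo a b → ∃ f', HasDerivAt f f' t ∧ f' ≤ -f t) :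
    exp b * f b ≤ exp a * f a := by
  have hexp : AbsolutelyContinuousOnInterval exp a b :=
    contDiff_exp.contDiffOn.absolutelyContinuousOnInterval
  refine le_of_ae_deriv_nonpos (g := fun t => exp t * f t) hab (hexp.fun_mul hf) ?_
  filter_upwards [hd] with t ht hmem
  obtain ⟨f', hder, hle⟩ := ht hmem
  rw [((hasDerivAt_exp t).fun_mul hder).deriv]
  nlinarith [exp_pos t]

end AbsolutelyContinuousOnInterval

theorem stmt_3_general {n : ℕ} (K : Set (EuclideanSpace ℝ (Fin n)))
    (hKcpt : IsCompact K) (hKconv : Convex ℝ K)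
    (x : ℝ → EuclideanSpace ℝ (Fin n))
    (hlip : LocallyLipschitz x) (hx0 : x 0 ∈ K)
    (hdyn : ∀ᵐ t ∂(volume.restrict (Set.Ici (0:ℝ))),
      ∃ b ∈ K, HasDerivAt x (b - x t) t) :
    ∀ t ≥ (0:ℝ), x t ∈ K := by
  intro T hT
  by_contra hxT
  obtain ⟨φ, u, hφK, hφxT⟩ := geometric_hahn_banach_closed_point hKconv hKcpt.isClosed hxT
  obtain ⟨C, hC⟩ :=
    hlip.locallyLipschitzOn.exists_lipschitzOnWith_of_compact (isCompact_uIcc (a := 0) (b := T))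
  have hac : AbsolutelyContinuousOnInterval (fun t => φ (x t) - u) 0 T :=
    (φ.lipschitz.comp_lipschitzOnWith hC).absolutelyContinuousOnInterval.sub
      (LipschitzWith.const u).lipschitzOnWith.absolutelyContinuousOnInterval
  have hdecay : ∀ᵐ t, t ∈ Ioo 0 T →
      ∃ f', HasDerivAt (fun s => φ (x s) - u) f' t ∧ f' ≤ -(φ (x t) - u) := by
    filter_upwards [(ae_restrict_iff' measurableSet_Ici).1 hdyn] with t ht hmem
    obtain ⟨b, hbK, hder⟩ := ht hmem.1.le
    refine ⟨φ (b - x t), (φ.hasFDerivAt.comp_hasDerivAt t hder).sub_const u, ?_⟩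
    linarith [map_sub φ b (x t), hφK b hbK]
  have hmono := hac.exp_mul_le_of_ae_deriv_le_neg hT hdecay
  nlinarith [exp_pos T, hφK (x 0) hx0, exp_zero]

/-- Forward invariance of a nonempty compact convex set `K` under the best
response dynamics: if `x` is locally Lipschitz, `x(0) ∈ K`, and for a.e. `t ≥ 0` the
derivative `x′(t)` exists and equals `b(t) − x(t)` for some `b(t) ∈ K`, then `x(t) ∈ K`
for all `t ≥ 0`. -/
theorem stmt_3 {n : ℕ} (K : Set (EuclideanSpace ℝ (Fin n)))
    (hKne : K.Nonempty) (hKcpt : IsCompact K) (hKconv : Convex ℝ K)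
    (x : ℝ → EuclideanSpace ℝ (Fin n))
    (hlip : LocallyLipschitz x) (hx0 : x 0 ∈ K)
    (hdyn : ∀ᵐ t ∂(volume.restrict (Set.Ici (0:ℝ))),
      ∃ b ∈ K, HasDerivAt x (b - x t) t) :
    ∀ t ≥ (0:ℝ), x t ∈ K :=
  stmt_3_general K hKcpt hKconv x hlip hx0 hdyn
end

section
/- Let K ⊆ ℝⁿ be nonempty, compact, and convex, and let F : ℝⁿ → ℝⁿ be continuously differentiable and monotone on K. Define V(x) = ⟨x, F(x)⟩ − min_{y∈K} ⟨y, F(x)⟩. Let x : [0, ∞) → ℝⁿ be locally Lipschitz with x(t) ∈ K for all t ≥ 0, and suppose that for almost every t ≥ 0 there exists b(t) ∈ argmin_{y∈K} ⟨y, F(x(t))⟩ such that x′(t) = b(t) − x(t). Then V(x(t)) ≤ V(x(0))·e^{−t} for all t ≥ 0. -/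
open scoped InnerProductSpace
open MeasureTheory

/-! The function `t ↦ eᵗ V(x t)` is locally Lipschitz, hence absolutely continuous, so it is
enough that its derivative is `≤ 0` almost everywhere. At a time `t` with `ẋ t = b − x t` and `b`
a best response to `F (x t)`, we have `V (x s) ≥ ⟪x s − b, F (x s)⟫` for every `s`, with equality at
`s = t`; so both sides have the same derivative at `t`, namely `−eᵗ ⟪b − x t, DF (x t) (b − x t)⟫`.
This is `≤ 0` because monotonicity of `F` on the segment `[x t, b] ⊆ K` makes `DF (x t)` positive
semidefinite in the direction `b − x t`. -/

open Set Filter Topology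

lemma LocallyLipschitz.absolutelyContinuousOnInterval {E : Type*} [SeminormedAddCommGroup E]
    {f : ℝ → E} (hf : LocallyLipschitz f) (a b : ℝ) : AbsolutelyContinuousOnInterval f a b :=
  let ⟨_, hK⟩ := hf.locallyLipschitzOn.exists_lipschitzOnWith_of_compact isCompact_uIcc
  hK.absolutelyContinuousOnInterval

lemma AbsolutelyContinuousOnInterval.le_of_ae_deriv_nonpos_s5 {f : ℝ → ℝ} {a b : ℝ}
    (hf : AbsolutelyContinuousOnInterval f a b) (hab : a ≤ b)
    (hf' : ∀ᵐ t, t ∈ Ioc a b → deriv f t ≤ 0) : f b ≤ f a := by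
  rw [← sub_nonpos, ← hf.integral_deriv_eq_sub, intervalIntegral.integral_of_le hab]
  exact integral_nonpos_of_ae ((ae_restrict_iff' measurableSet_Ioc).2 hf')

lemma deriv_eq_of_hasDerivAt_of_eventuallyLE {f g : ℝ → ℝ} {g' t : ℝ} (hg : HasDerivAt g g' t)
    (hf : DifferentiableAt ℝ f t) (hle : g ≤ᶠ[𝓝 t] f) (heq : f t = g t) : deriv f t = g' := by
  have hmin : IsLocalMin (f - g) t := by
    filter_upwards [hle] with s hs
    simp only [Pi.sub_apply, heq, sub_self, sub_nonneg, hs]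
  exact sub_eq_zero.1 (hmin.hasDerivAt_eq_zero (hf.hasDerivAt.sub hg))

section InnerProductSpace

variable {E : Type*} [NormedAddCommGroup E] [InnerProductSpace ℝ E]

lemma lipschitzWith_of_forall_isLeast_inner {K : Set E} {R : ℝ} (hR : ∀ y ∈ K, ‖y‖ ≤ R)
    {m : E → ℝ} (hm : ∀ π, IsLeast ((fun y => ⟪y, π⟫_ℝ) '' K) (m π)) :
    LipschitzWith R.toNNReal m := by
  refine LipschitzWith.of_le_add_mul _ fun π₁ π₂ => ?_
  obtain ⟨y, hyK, hy⟩ := (hm π₂).1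
  calc m π₁ ≤ ⟪y, π₁⟫_ℝ := (hm π₁).2 ⟨y, hyK, rfl⟩
    _ = m π₂ + ⟪y, π₁ - π₂⟫_ℝ := by rw [inner_sub_right, ← hy]; ring
    _ ≤ m π₂ + ‖y‖ * ‖π₁ - π₂‖ := by gcongr; exact real_inner_le_norm _ _
    _ ≤ m π₂ + R.toNNReal * dist π₁ π₂ := by
      rw [dist_eq_norm]
      gcongr
      exact (hR y hyK).trans (Real.le_coe_toNNReal R)

lemma inner_fderiv_nonneg_of_monotoneOn {K : Set E} (hK : Convex ℝ K) {F : E → E}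
    (hmono : ∀ u ∈ K, ∀ v ∈ K, 0 ≤ ⟪u - v, F u - F v⟫_ℝ) {z b : E}
    (hF : DifferentiableAt ℝ F z) (hz : z ∈ K) (hb : b ∈ K) :
    0 ≤ ⟪b - z, fderiv ℝ F z (b - z)⟫_ℝ := by
  have hmin : IsMinOn (fun u => ⟪b - z, F u⟫_ℝ) (segment ℝ z b) z := by
    rw [segment_eq_image']
    rintro _ ⟨θ, ⟨hθ0, hθ1⟩, rfl⟩
    have hu : z + θ • (b - z) ∈ K := hK.add_smul_sub_mem hz hb ⟨hθ0, hθ1⟩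
    have := hmono _ hu z hz
    rw [add_sub_cancel_left, real_inner_smul_left, inner_sub_right] at this
    rcases hθ0.eq_or_lt with rfl | hθ
    · simp
    · simpa using (nonneg_of_mul_nonneg_right this hθ)
  have hφ : HasFDerivAt (fun u => ⟪b - z, F u⟫_ℝ)
      ((innerSL ℝ (b - z)).comp (fderiv ℝ F z)) z :=
    (innerSL ℝ (b - z)).hasFDerivAt.comp z hF.hasFDerivAt
  exact hmin.localize.hasFDerivWithinAt_nonneg hφ.hasFDerivWithinAt
    (sub_mem_posTangentConeAt_of_segment_subset subset_rfl)

theorem deriv_exp_mul_lyapunov_nonpos {K : Set E} (hK : Convex ℝ K) {F : E → E}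
    (hmono : ∀ u ∈ K, ∀ v ∈ K, 0 ≤ ⟪u - v, F u - F v⟫_ℝ) {m : E → ℝ}
    (hm : ∀ π, IsLeast ((fun y => ⟪y, π⟫_ℝ) '' K) (m π)) {V : E → ℝ}
    (hV : ∀ z, V z = ⟪z, F z⟫_ℝ - m (F z)) {x : ℝ → E} {t : ℝ} {b : E}
    (hF : DifferentiableAt ℝ F (x t)) (hxt : x t ∈ K) (hb : b ∈ K)
    (hbmin : ∀ z ∈ K, ⟪b, F (x t)⟫_ℝ ≤ ⟪z, F (x t)⟫_ℝ) (hx : HasDerivAt x (b - x t) t) :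
    deriv (fun s => Real.exp s * V (x s)) t ≤ 0 := by
  by_cases hd : DifferentiableAt ℝ (fun s => Real.exp s * V (x s)) t
  swap
  · rw [deriv_zero_of_not_differentiableAt hd]
  set w := b - x t
  have hφ : HasDerivAt (fun s => Real.exp s * ⟪x s - b, F (x s)⟫_ℝ)
      (-(Real.exp t * ⟪w, fderiv ℝ F (x t) w⟫_ℝ)) t := by
    refine ((Real.hasDerivAt_exp t).mul
      ((hx.sub_const b).inner ℝ (hF.hasFDerivAt.comp_hasDerivAt t hx))).congr_deriv ?_
    rw [← neg_sub b (x t), inner_neg_left, inner_neg_left]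
    ring
  have hle : (fun s => Real.exp s * ⟪x s - b, F (x s)⟫_ℝ) ≤ᶠ[𝓝 t]
      fun s => Real.exp s * V (x s) := by
    refine Eventually.of_forall fun s => mul_le_mul_of_nonneg_left ?_ (Real.exp_pos s).le
    rw [hV, inner_sub_left]
    linarith [(hm (F (x s))).2 ⟨b, hb, rfl⟩]
  have hmt : m (F (x t)) = ⟪b, F (x t)⟫_ℝ :=
    (hm _).unique ⟨⟨b, hb, rfl⟩, fun _ ⟨y, hy, hy'⟩ => hy' ▸ hbmin y hy⟩
  rw [deriv_eq_of_hasDerivAt_of_eventuallyLE hφ hd hle (by rw [hV, hmt, inner_sub_left])]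
  exact neg_nonpos.2 (mul_nonneg (Real.exp_pos t).le
    (inner_fderiv_nonneg_of_monotoneOn hK hmono hF hxt hb))

end InnerProductSpace

theorem stmt_5_general {n : ℕ} (K : Set (EuclideanSpace ℝ (Fin n)))
    (hKcpt : IsCompact K) (hKconv : Convex ℝ K)
    (F : EuclideanSpace ℝ (Fin n) → EuclideanSpace ℝ (Fin n))
    (hF : ContDiff ℝ 1 F)
    (hmono : ∀ u ∈ K, ∀ v ∈ K, 0 ≤ ⟪u - v, F u - F v⟫_ℝ)
    (m : EuclideanSpace ℝ (Fin n) → ℝ)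
    (hm : ∀ π : EuclideanSpace ℝ (Fin n), IsLeast ((fun y => ⟪y, π⟫_ℝ) '' K) (m π))
    (V : EuclideanSpace ℝ (Fin n) → ℝ)
    (hV : ∀ z, V z = ⟪z, F z⟫_ℝ - m (F z))
    (x : ℝ → EuclideanSpace ℝ (Fin n))
    (hlip : LocallyLipschitz x) (hxK : ∀ t ≥ (0:ℝ), x t ∈ K)
    (hdyn : ∀ᵐ t ∂(volume.restrict (Set.Ici (0:ℝ))),
      ∃ b, (b ∈ K ∧ ∀ z ∈ K, ⟪b, F (x t)⟫_ℝ ≤ ⟪z, F (x t)⟫_ℝ) ∧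
        HasDerivAt x (b - x t) t) :
    ∀ t ≥ (0:ℝ), V (x t) ≤ V (x 0) * Real.exp (-t) := by
  intro T hT
  obtain ⟨R, hR⟩ := hKcpt.isBounded.exists_norm_le
  have hVlip : LocallyLipschitz V := by
    rw [show V = fun z => ⟪z, F z⟫_ℝ - m (F z) from funext hV]
    exact (contDiff_id.inner ℝ hF).locallyLipschitz.sub
      ((lipschitzWith_of_forall_isLeast_inner hR hm).locallyLipschitz.comp hF.locallyLipschitz)
  have hAC : AbsolutelyContinuousOnInterval (fun s => Real.exp s * V (x s)) 0 T :=
    Real.contDiff_exp.contDiffOn.absolutelyContinuousOnInterval.mul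
      ((hVlip.comp hlip).absolutelyContinuousOnInterval 0 T)
  have hdecay := hAC.le_of_ae_deriv_nonpos_s5 hT <| by
    filter_upwards [ae_imp_of_ae_restrict hdyn] with t ht htT
    obtain ⟨b, ⟨hbK, hbmin⟩, hx⟩ := ht htT.1.le
    exact deriv_exp_mul_lyapunov_nonpos hKconv hmono hm hV (hF.differentiable one_ne_zero _)
      (hxK t htT.1.le) hbK hbmin hx
  rw [Real.exp_zero, one_mul] at hdecay
  rw [Real.exp_neg, ← div_eq_mul_inv, le_div_iff₀ (Real.exp_pos T), mul_comm]
  exact hdecay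

/-- Lyapunov decrease along best response dynamics. For `K` nonempty compact
convex, `F` continuously differentiable and monotone on `K`,
`V(x) = ⟨x, F(x)⟩ − min_{y∈K} ⟨y, F(x)⟩`, and a locally Lipschitz trajectory `x(t) ∈ K`
satisfying `x′(t) = b(t) − x(t)` with `b(t) ∈ argmin_{y∈K} ⟨y, F(x(t))⟩` for a.e. `t ≥ 0`,
one has `V(x(t)) ≤ V(x(0)) e^{−t}` for all `t ≥ 0`. -/
theorem stmt_5 {n : ℕ} (K : Set (EuclideanSpace ℝ (Fin n)))
    (hKne : K.Nonempty) (hKcpt : IsCompact K) (hKconv : Convex ℝ K)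
    (F : EuclideanSpace ℝ (Fin n) → EuclideanSpace ℝ (Fin n))
    (hF : ContDiff ℝ 1 F)
    (hmono : ∀ u ∈ K, ∀ v ∈ K, 0 ≤ ⟪u - v, F u - F v⟫_ℝ)
    (m : EuclideanSpace ℝ (Fin n) → ℝ)
    (hm : ∀ π : EuclideanSpace ℝ (Fin n), IsLeast ((fun y => ⟪y, π⟫_ℝ) '' K) (m π))
    (V : EuclideanSpace ℝ (Fin n) → ℝ)
    (hV : ∀ z, V z = ⟪z, F z⟫_ℝ - m (F z))
    (x : ℝ → EuclideanSpace ℝ (Fin n))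
    (hlip : LocallyLipschitz x) (hxK : ∀ t ≥ (0:ℝ), x t ∈ K)
    (hdyn : ∀ᵐ t ∂(volume.restrict (Set.Ici (0:ℝ))),
      ∃ b, (b ∈ K ∧ ∀ z ∈ K, ⟪b, F (x t)⟫_ℝ ≤ ⟪z, F (x t)⟫_ℝ) ∧
        HasDerivAt x (b - x t) t) :
    ∀ t ≥ (0:ℝ), V (x t) ≤ V (x 0) * Real.exp (-t) :=
  stmt_5_general K hKcpt hKconv F hF hmono m hm V hV x hlip hxK hdyn
end

section
/- Let K ⊆ ℝⁿ be nonempty, compact, and convex, let F : ℝⁿ → ℝⁿ be strongly monotone on K with constant c > 0, and let x* ∈ K solve VI(K,F). Then for every x ∈ K, U(x, F(x)) = ⟨x, F(x)⟩ − min_{y∈K} ⟨y, F(x)⟩ ≥ c‖x − x*‖². -/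
open scoped InnerProductSpace

/-- If `F` is strongly monotone on `K` with constant `c > 0` and `x*` solves
`VI(K,F)`, then `U(x, F(x)) = ⟨x, F(x)⟩ − min_{y∈K} ⟨y, F(x)⟩ ≥ c‖x − x*‖²` on `K`. -/
theorem stmt_7 {n : ℕ} (K : Set (EuclideanSpace ℝ (Fin n)))
    (hKne : K.Nonempty) (hKcpt : IsCompact K) (hKconv : Convex ℝ K)
    (F : EuclideanSpace ℝ (Fin n) → EuclideanSpace ℝ (Fin n))
    (c : ℝ) (hc : 0 < c)
    (hmono : ∀ u ∈ K, ∀ v ∈ K, c * ‖u - v‖ ^ 2 ≤ ⟪u - v, F u - F v⟫_ℝ)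
    (xstar : EuclideanSpace ℝ (Fin n)) (hxstarK : xstar ∈ K)
    (hxstar : ∀ y ∈ K, 0 ≤ ⟪y - xstar, F xstar⟫_ℝ)
    (m : EuclideanSpace ℝ (Fin n) → ℝ)
    (hm : ∀ π : EuclideanSpace ℝ (Fin n), IsLeast ((fun y => ⟪y, π⟫_ℝ) '' K) (m π)) :
    ∀ x ∈ K, c * ‖x - xstar‖ ^ 2 ≤ ⟪x, F x⟫_ℝ - m (F x) := by
  intro x hx
  have hmle : m (F x) ≤ ⟪xstar, F x⟫_ℝ := (hm (F x)).2 ⟨xstar, hxstarK, rfl⟩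
  have h1 : c * ‖x - xstar‖ ^ 2 ≤ ⟪x - xstar, F x - F xstar⟫_ℝ :=
    hmono x hx xstar hxstarK
  have h2 : 0 ≤ ⟪x - xstar, F xstar⟫_ℝ := hxstar x hx
  simp only [inner_sub_left, inner_sub_right] at h1 h2
  linarith
end

section
/- Let K ⊆ ℝⁿ be nonempty, compact, and convex with diameter D_K, let F : ℝⁿ → ℝⁿ be Lipschitz on K with constant L, and let x* ∈ K solve VI(K,F). Then for every x ∈ K and every Δ ∈ ℝⁿ, U(x, F(x) + Δ) ≤ L‖x − x*‖² + (‖F(x*)‖ + D_K·L)‖x − x*‖ + D_K‖Δ‖. -/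
open scoped InnerProductSpace

/-- Upper bound on the perturbed Lyapunov function. If `K` has diameter
`D_K`, `F` is `L`-Lipschitz on `K`, and `x*` solves `VI(K,F)`, then for all `x ∈ K` and
`Δ ∈ ℝⁿ`, `U(x, F(x)+Δ) ≤ L‖x−x*‖² + (‖F(x*)‖ + D_K L)‖x−x*‖ + D_K‖Δ‖`. -/
theorem stmt_8 {n : ℕ} (K : Set (EuclideanSpace ℝ (Fin n)))
    (hKne : K.Nonempty) (hKcpt : IsCompact K) (hKconv : Convex ℝ K)
    (DK : ℝ)
    (hDK : IsGreatest ((fun p : EuclideanSpace ℝ (Fin n) × EuclideanSpace ℝ (Fin n) =>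
      ‖p.1 - p.2‖) '' (K ×ˢ K)) DK)
    (F : EuclideanSpace ℝ (Fin n) → EuclideanSpace ℝ (Fin n))
    (L : ℝ) (hL : 0 ≤ L)
    (hLip : ∀ u ∈ K, ∀ v ∈ K, ‖F u - F v‖ ≤ L * ‖u - v‖)
    (xstar : EuclideanSpace ℝ (Fin n)) (hxstarK : xstar ∈ K)
    (hxstar : ∀ y ∈ K, 0 ≤ ⟪y - xstar, F xstar⟫_ℝ)
    (m : EuclideanSpace ℝ (Fin n) → ℝ)
    (hm : ∀ π : EuclideanSpace ℝ (Fin n), IsLeast ((fun y => ⟪y, π⟫_ℝ) '' K) (m π)) :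
    ∀ x ∈ K, ∀ Δ : EuclideanSpace ℝ (Fin n),
      ⟪x, F x + Δ⟫_ℝ - m (F x + Δ) ≤
        L * ‖x - xstar‖ ^ 2 + (‖F xstar‖ + DK * L) * ‖x - xstar‖ + DK * ‖Δ‖ := by
  intro x hx Δ
  set π := F x + Δ with hπ
  obtain ⟨y, hyK, hy⟩ := (hm π).1
  have hDK0 : 0 ≤ DK := by
    obtain ⟨p, _, hp⟩ := hDK.1
    rw [← hp]; exact norm_nonneg _
  have hdiam : ∀ u ∈ K, ∀ v ∈ K, ‖u - v‖ ≤ DK := fun u hu v hv =>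
    hDK.2 ⟨(u, v), ⟨hu, hv⟩, rfl⟩
  have hxy : ‖x - y‖ ≤ DK := hdiam x hx y hyK
  have key : ⟪x, π⟫_ℝ - m π = ⟪x - y, π⟫_ℝ := by
    rw [← hy, inner_sub_left]
  rw [key]
  have hsplit : ⟪x - y, π⟫_ℝ =
      ⟪x - y, F x - F xstar⟫_ℝ + ⟪x - y, F xstar⟫_ℝ + ⟪x - y, Δ⟫_ℝ := by
    rw [hπ, ← inner_add_right, ← inner_add_right]
    congr 1
    abel
  rw [hsplit]
  have hA : ⟪x - y, F x - F xstar⟫_ℝ ≤ DK * (L * ‖x - xstar‖) := by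
    calc ⟪x - y, F x - F xstar⟫_ℝ ≤ ‖x - y‖ * ‖F x - F xstar‖ := real_inner_le_norm _ _
    _ ≤ DK * (L * ‖x - xstar‖) :=
        mul_le_mul hxy (hLip x hx xstar hxstarK) (norm_nonneg _) hDK0
  have hB : ⟪x - y, F xstar⟫_ℝ ≤ ‖F xstar‖ * ‖x - xstar‖ := by
    have h1 : ⟪x - y, F xstar⟫_ℝ = ⟪x - xstar, F xstar⟫_ℝ - ⟪y - xstar, F xstar⟫_ℝ := by
      rw [← inner_sub_left]; congr 1; abel
    rw [h1]
    have h2 : ⟪x - xstar, F xstar⟫_ℝ ≤ ‖x - xstar‖ * ‖F xstar‖ := real_inner_le_norm _ _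
    have h3 := hxstar y hyK
    nlinarith [real_inner_le_norm (x - xstar) (F xstar)]
  have hC : ⟪x - y, Δ⟫_ℝ ≤ DK * ‖Δ‖ := by
    calc ⟪x - y, Δ⟫_ℝ ≤ ‖x - y‖ * ‖Δ‖ := real_inner_le_norm _ _
    _ ≤ DK * ‖Δ‖ := mul_le_mul_of_nonneg_right hxy (norm_nonneg _)
  nlinarith [sq_nonneg ‖x - xstar‖]
end

section
/- Let K ⊆ ℝⁿ be nonempty, compact, and convex, let F : ℝⁿ → ℝⁿ be strongly monotone on K with constant c > 0, and let δ : ℝⁿ → ℝⁿ. Suppose x* ∈ K solves VI(K,F) and x̃* ∈ K solves VI(K, F + δ). Then for every z ∈ argmin_{y∈K} ⟨y, F(x̃*)⟩, c‖x̃* − x*‖² ≤ ⟨z − x̃*, δ(x̃*)⟩; in particular, ‖x̃* − x*‖ ≤ √(h(x̃*)/c), where h(x) = max{⟨z − x, δ(x)⟩ : z ∈ argmin_{y∈K} ⟨y, F(x)⟩}. -/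
open scoped InnerProductSpace

/-- Theorem 3, perturbed-equilibrium bound: if `x*` solves `VI(K,F)` and
`x̃*` solves `VI(K, F + δ)`, then for every `z ∈ argmin_{y∈K} ⟨y, F(x̃*)⟩` one has
`c‖x̃* − x*‖² ≤ ⟨z − x̃*, δ(x̃*)⟩`, and consequently `‖x̃* − x*‖ ≤ √(h(x̃*)/c)`, where
`h(x̃*) = max{⟨z − x̃*, δ(x̃*)⟩ : z ∈ argmin_{y∈K} ⟨y, F(x̃*)⟩}`. -/
theorem stmt_14 {n : ℕ} (K : Set (EuclideanSpace ℝ (Fin n)))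
    (hKne : K.Nonempty) (hKcpt : IsCompact K) (hKconv : Convex ℝ K)
    (F δ : EuclideanSpace ℝ (Fin n) → EuclideanSpace ℝ (Fin n))
    (c : ℝ) (hc : 0 < c)
    (hmono : ∀ u ∈ K, ∀ v ∈ K, c * ‖u - v‖ ^ 2 ≤ ⟪u - v, F u - F v⟫_ℝ)
    (xstar : EuclideanSpace ℝ (Fin n)) (hxstarK : xstar ∈ K)
    (hxstar : ∀ y ∈ K, 0 ≤ ⟪y - xstar, F xstar⟫_ℝ)
    (xtil : EuclideanSpace ℝ (Fin n)) (hxtilK : xtil ∈ K)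
    (hxtil : ∀ y ∈ K, 0 ≤ ⟪y - xtil, F xtil + δ xtil⟫_ℝ)
    (hval : ℝ)
    (hh : IsGreatest ((fun z => ⟪z - xtil, δ xtil⟫_ℝ) ''
      {z | z ∈ K ∧ ∀ w ∈ K, ⟪z, F xtil⟫_ℝ ≤ ⟪w, F xtil⟫_ℝ}) hval) :
    (∀ z ∈ K, (∀ w ∈ K, ⟪z, F xtil⟫_ℝ ≤ ⟪w, F xtil⟫_ℝ) →
      c * ‖xtil - xstar‖ ^ 2 ≤ ⟪z - xtil, δ xtil⟫_ℝ) ∧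
    ‖xtil - xstar‖ ≤ Real.sqrt (hval / c) := by
  have key : ∀ z ∈ K, (∀ w ∈ K, ⟪z, F xtil⟫_ℝ ≤ ⟪w, F xtil⟫_ℝ) →
      c * ‖xtil - xstar‖ ^ 2 ≤ ⟪z - xtil, δ xtil⟫_ℝ := by
    intro z hzK hzmin
    have h1 := hmono xtil hxtilK xstar hxstarK
    have h2 := hxstar xtil hxtilK
    have h3 := hxtil z hzK
    have h4 := hzmin xstar hxstarK
    have e1 : ⟪xtil - xstar, F xtil - F xstar⟫_ℝ
        = (⟪xtil, F xtil⟫_ℝ - ⟪xstar, F xtil⟫_ℝ) - ⟪xtil - xstar, F xstar⟫_ℝ := by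
      rw [inner_sub_right, inner_sub_left]
    have e3 : ⟪z - xtil, F xtil + δ xtil⟫_ℝ
        = (⟪z, F xtil⟫_ℝ - ⟪xtil, F xtil⟫_ℝ) + ⟪z - xtil, δ xtil⟫_ℝ := by
      rw [inner_add_right, inner_sub_left]
    linarith
  refine ⟨key, ?_⟩
  obtain ⟨⟨z, ⟨hzK, hzmin⟩, hzeq⟩, _⟩ := hh
  have h5 : c * ‖xtil - xstar‖ ^ 2 ≤ hval := hzeq ▸ key z hzK hzmin
  have h6 : ‖xtil - xstar‖ ^ 2 ≤ hval / c := by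
    rw [le_div_iff₀ hc]; linarith
  calc ‖xtil - xstar‖ = Real.sqrt (‖xtil - xstar‖ ^ 2) :=
        (Real.sqrt_sq (norm_nonneg _)).symm
    _ ≤ Real.sqrt (hval / c) := Real.sqrt_le_sqrt h6
end

section
/- Let K ⊆ ℝⁿ be nonempty, compact, and convex with diameter D_K, let F : ℝⁿ → ℝⁿ be continuously differentiable and strongly monotone on K with constant c > 0, and set σ = max_{x∈K} ‖DF(x)‖_op and M₁ = max_{x∈K} ‖F(x)‖. Fix x ∈ K, Δ, Δ̇, ε ∈ ℝⁿ, and let b ∈ argmin_{y∈K} ⟨y, F(x) + Δ⟩. Then ⟨b − x + ε, F(x) + Δ⟩ + ⟨x − b, DF(x)(b − x + ε) + Δ̇⟩ ≤ −U(x, F(x) + Δ) + (1/(2c))‖Δ̇‖² + (σ²/(2c))‖ε‖² + M₁‖ε‖ + ‖ε‖·‖Δ‖. -/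
open scoped InnerProductSpace
open Filter Topology

/-! Expanding the left side, minimality of `b` turns `⟪b - x, F x + Δ⟫` into `-U(x, F x + Δ)`.
Strong monotonicity, differentiated along the segment from `x` to `b`, gives
`c‖b - x‖² ≤ ⟪b - x, DF(x)(b - x)⟫`; Cauchy–Schwarz bounds the remaining terms, and Young's
inequality absorbs the cross terms `‖x - b‖ (σ‖ε‖ + ‖Δ̇‖)` into `-c‖x - b‖²`. -/

theorem le_inner_fderiv_of_strongly_monotoneOn {E : Type*} [NormedAddCommGroup E]
    [InnerProductSpace ℝ E] {K : Set E} (hK : Convex ℝ K) {F : E → E} {c : ℝ}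
    (hmono : ∀ u ∈ K, ∀ v ∈ K, c * ‖u - v‖ ^ 2 ≤ ⟪u - v, F u - F v⟫_ℝ)
    {x y : E} (hx : x ∈ K) (hy : y ∈ K) (hF : DifferentiableAt ℝ F x) :
    c * ‖y - x‖ ^ 2 ≤ ⟪y - x, fderiv ℝ F x (y - x)⟫_ℝ := by
  set h := y - x
  have hline : HasDerivAt (fun t : ℝ => F (x + t • h)) (fderiv ℝ F x h) 0 := by
    have hpath : HasDerivAt (fun t : ℝ => x + t • h) h 0 := by
      simpa using ((hasDerivAt_id (0 : ℝ)).smul_const h).const_add x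
    have hFx : HasFDerivAt F (fderiv ℝ F x) (x + (0 : ℝ) • h) := by simpa using hF.hasFDerivAt
    exact hFx.comp_hasDerivAt 0 hpath
  have hslope : Tendsto (fun t : ℝ => ⟪h, t⁻¹ • (F (x + t • h) - F x)⟫_ℝ) (𝓝[>] 0)
      (𝓝 ⟪h, fderiv ℝ F x h⟫_ℝ) :=
    ((continuous_const.inner continuous_id).tendsto _).comp
      (by simpa using hline.tendsto_slope_zero_right)
  refine ge_of_tendsto hslope ?_
  filter_upwards [Ioc_mem_nhdsGT one_pos] with t ⟨ht0, ht1⟩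
  have hsegment := hmono _ (hK.add_smul_sub_mem hx hy ⟨ht0.le, ht1⟩) x hx
  rw [add_sub_cancel_left, real_inner_smul_left, norm_smul, Real.norm_of_nonneg ht0.le]
    at hsegment
  rw [real_inner_smul_right, ← div_eq_inv_mul, le_div_iff₀ ht0]
  nlinarith

theorem mul_add_sub_mul_sq_le {c : ℝ} (hc : 0 < c) (r a d : ℝ) :
    r * (a + d) - c * r ^ 2 ≤ a ^ 2 / (2 * c) + d ^ 2 / (2 * c) := by
  rw [← add_div, le_div_iff₀ (by positivity)]
  nlinarith [sq_nonneg (c * r - a), sq_nonneg (c * r - d), sq_nonneg (a - d)]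

theorem stmt_15_general {n : ℕ} (K : Set (EuclideanSpace ℝ (Fin n)))
    (hKconv : Convex ℝ K)
    (F : EuclideanSpace ℝ (Fin n) → EuclideanSpace ℝ (Fin n))
    (hF : ContDiff ℝ 1 F)
    (c : ℝ) (hc : 0 < c)
    (hmono : ∀ u ∈ K, ∀ v ∈ K, c * ‖u - v‖ ^ 2 ≤ ⟪u - v, F u - F v⟫_ℝ)
    (σ : ℝ) (hσ : IsGreatest ((fun z => ‖fderiv ℝ F z‖) '' K) σ)
    (M₁ : ℝ) (hM₁ : IsGreatest ((fun z => ‖F z‖) '' K) M₁)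
    (m : EuclideanSpace ℝ (Fin n) → ℝ)
    (hm : ∀ π : EuclideanSpace ℝ (Fin n), IsLeast ((fun y => ⟪y, π⟫_ℝ) '' K) (m π))
    (x : EuclideanSpace ℝ (Fin n)) (hx : x ∈ K)
    (Δ Δdot ε : EuclideanSpace ℝ (Fin n))
    (b : EuclideanSpace ℝ (Fin n)) (hbK : b ∈ K)
    (hb : ∀ z ∈ K, ⟪b, F x + Δ⟫_ℝ ≤ ⟪z, F x + Δ⟫_ℝ) :
    ⟪b - x + ε, F x + Δ⟫_ℝ + ⟪x - b, fderiv ℝ F x (b - x + ε) + Δdot⟫_ℝ ≤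
      -(⟪x, F x + Δ⟫_ℝ - m (F x + Δ)) + (1 / (2 * c)) * ‖Δdot‖ ^ 2
        + (σ ^ 2 / (2 * c)) * ‖ε‖ ^ 2 + M₁ * ‖ε‖ + ‖ε‖ * ‖Δ‖ := by
  set L := fderiv ℝ F x
  have hmin : m (F x + Δ) = ⟪b, F x + Δ⟫_ℝ :=
    (hm _).unique ⟨⟨b, hbK, rfl⟩, by rintro _ ⟨z, hz, rfl⟩; exact hb z hz⟩
  have hexpand : ⟪b - x + ε, F x + Δ⟫_ℝ + ⟪x - b, L (b - x + ε) + Δdot⟫_ℝ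
      = ⟪b, F x + Δ⟫_ℝ - ⟪x, F x + Δ⟫_ℝ + ⟪ε, F x⟫_ℝ + ⟪ε, Δ⟫_ℝ
        - ⟪b - x, L (b - x)⟫_ℝ + ⟪x - b, L ε⟫_ℝ + ⟪x - b, Δdot⟫_ℝ := by
    rw [← neg_sub b x]
    simp only [map_add, inner_add_left, inner_add_right, inner_neg_left, inner_sub_left]
    ring
  have hcoercive : c * ‖x - b‖ ^ 2 ≤ ⟪b - x, L (b - x)⟫_ℝ := by
    rw [norm_sub_rev]
    exact le_inner_fderiv_of_strongly_monotoneOn hKconv hmono hx hbK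
      (hF.differentiable one_ne_zero x)
  have hLε : ⟪x - b, L ε⟫_ℝ ≤ ‖x - b‖ * (σ * ‖ε‖) := by
    calc ⟪x - b, L ε⟫_ℝ ≤ ‖x - b‖ * ‖L ε‖ := real_inner_le_norm _ _
      _ ≤ ‖x - b‖ * (‖L‖ * ‖ε‖) := by gcongr; exact L.le_opNorm ε
      _ ≤ ‖x - b‖ * (σ * ‖ε‖) := by gcongr; exact hσ.2 ⟨x, hx, rfl⟩
  have hΔdot : ⟪x - b, Δdot⟫_ℝ ≤ ‖x - b‖ * ‖Δdot‖ := real_inner_le_norm _ _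
  have hFx : ⟪ε, F x⟫_ℝ ≤ ‖ε‖ * M₁ :=
    (real_inner_le_norm _ _).trans (by gcongr; exact hM₁.2 ⟨x, hx, rfl⟩)
  have hΔ : ⟪ε, Δ⟫_ℝ ≤ ‖ε‖ * ‖Δ‖ := real_inner_le_norm _ _
  have hyoung := mul_add_sub_mul_sq_le hc ‖x - b‖ (σ * ‖ε‖) ‖Δdot‖
  rw [hexpand, hmin]
  linear_combination hcoercive + hLε + hΔdot + hFx + hΔ + hyoung

/-- key derivative estimate in Theorem 2, stated algebraically: for
`x ∈ K`, disturbance values `Δ, Δ̇, ε` and a best response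
`b ∈ argmin_{y∈K} ⟨y, F(x) + Δ⟩`,
`⟨b − x + ε, F(x) + Δ⟩ + ⟨x − b, DF(x)(b − x + ε) + Δ̇⟩
  ≤ −U(x, F(x)+Δ) + (1/(2c))‖Δ̇‖² + (σ²/(2c))‖ε‖² + M₁‖ε‖ + ‖ε‖‖Δ‖`. -/
theorem stmt_15 {n : ℕ} (K : Set (EuclideanSpace ℝ (Fin n)))
    (hKne : K.Nonempty) (hKcpt : IsCompact K) (hKconv : Convex ℝ K)
    (DK : ℝ)
    (hDK : IsGreatest ((fun p : EuclideanSpace ℝ (Fin n) × EuclideanSpace ℝ (Fin n) =>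
      ‖p.1 - p.2‖) '' (K ×ˢ K)) DK)
    (F : EuclideanSpace ℝ (Fin n) → EuclideanSpace ℝ (Fin n))
    (hF : ContDiff ℝ 1 F)
    (c : ℝ) (hc : 0 < c)
    (hmono : ∀ u ∈ K, ∀ v ∈ K, c * ‖u - v‖ ^ 2 ≤ ⟪u - v, F u - F v⟫_ℝ)
    (σ : ℝ) (hσ : IsGreatest ((fun z => ‖fderiv ℝ F z‖) '' K) σ)
    (M₁ : ℝ) (hM₁ : IsGreatest ((fun z => ‖F z‖) '' K) M₁)
    (m : EuclideanSpace ℝ (Fin n) → ℝ)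
    (hm : ∀ π : EuclideanSpace ℝ (Fin n), IsLeast ((fun y => ⟪y, π⟫_ℝ) '' K) (m π))
    (x : EuclideanSpace ℝ (Fin n)) (hx : x ∈ K)
    (Δ Δdot ε : EuclideanSpace ℝ (Fin n))
    (b : EuclideanSpace ℝ (Fin n)) (hbK : b ∈ K)
    (hb : ∀ z ∈ K, ⟪b, F x + Δ⟫_ℝ ≤ ⟪z, F x + Δ⟫_ℝ) :
    ⟪b - x + ε, F x + Δ⟫_ℝ + ⟪x - b, fderiv ℝ F x (b - x + ε) + Δdot⟫_ℝ ≤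
      -(⟪x, F x + Δ⟫_ℝ - m (F x + Δ)) + (1 / (2 * c)) * ‖Δdot‖ ^ 2
        + (σ ^ 2 / (2 * c)) * ‖ε‖ ^ 2 + M₁ * ‖ε‖ + ‖ε‖ * ‖Δ‖ :=
  stmt_15_general K hKconv F hF c hc hmono σ hσ M₁ hM₁ m hm x hx Δ Δdot ε b hbK hb
end
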